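/- In every line representation (α, β) of the Pappus gadget, the three anchor points α(p7), α(p8), α(p9) are collinear. -/

import Mathlib

set_option maxRecDepth 8000

abbrev Pt : Type := ℝ × ℝ

def IsLine (L : Set Pt) : Prop :=
  ∃ a b : Pt, a ≠ b ∧ L = (affineSpan ℝ {a, b} : Set Pt)

def IsSegment (S : Set Pt) : Prop :=
  ∃ a b : Pt, a ≠ b ∧ S = segment ℝ a b

structure PHypergraph (ι : Type) where
  V : Finset ι
  E : Finset (Finset ι)
  edge_nonempty : ∀ e ∈ E, e.Nonempty
  edge_subset : ∀ e ∈ E, e ⊆ V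

structure LineRep {ι : Type} (H : PHypergraph ι) where
  α : ι → Pt
  β : Finset ι → Set Pt
  α_inj : Set.InjOn α ↑H.V
  β_inj : Set.InjOn β ↑H.E
  β_isLine : ∀ e ∈ H.E, IsLine (β e)
  incidence : ∀ v ∈ H.V, ∀ e ∈ H.E, (v ∈ e ↔ α v ∈ β e)

structure SegmentRep {ι : Type} (H : PHypergraph ι) where
  α : ι → Pt
  β : Finset ι → Set Pt
  α_inj : Set.InjOn α ↑H.V
  β_inj : Set.InjOn β ↑H.E
  β_isSegment : ∀ e ∈ H.E, IsSegment (β e)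
  incidence : ∀ v ∈ H.V, ∀ e ∈ H.E, (v ∈ e ↔ α v ∈ β e)

def SegmentRep.Strict {ι : Type} {H : PHypergraph ι} (R : SegmentRep H) : Prop :=
  ∀ e ∈ H.E, ∀ e' ∈ H.E, e ≠ e' → (R.β e ∩ R.β e').Subsingleton

def LineRep.CrossingFree {ι : Type} {H : PHypergraph ι} (R : LineRep H) : Prop :=
  ∀ e ∈ H.E, ∀ e' ∈ H.E, ((R.β e ∩ R.β e').Nonempty ↔ ∃ v, v ∈ e ∧ v ∈ e')

def SegmentRep.CrossingFree {ι : Type} {H : PHypergraph ι} (R : SegmentRep H) : Prop :=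
  ∀ e ∈ H.E, ∀ e' ∈ H.E, ((R.β e ∩ R.β e').Nonempty ↔ ∃ v, v ∈ e ∧ v ∈ e')

def pappusE : Finset (Finset (Fin 9)) :=
  {({0, 1, 2} : Finset (Fin 9)), {3, 4, 5}, {0, 3, 7}, {0, 4, 8},
    {1, 3, 6}, {1, 5, 8}, {2, 4, 6}, {2, 5, 7}}

/-- The Pappus gadget: vertex `i : Fin 9` stands for `p(i+1)`;
the anchors `p7, p8, p9` are the vertices `6, 7, 8`. -/
def pappus : PHypergraph (Fin 9) where
  V := Finset.univ
  E := pappusE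
  edge_nonempty := by decide
  edge_subset := by decide

/-!
The Pappus gadget is a Pappus configuration: `p1, p2, p3` and `p4, p5, p6` are collinear, and the
anchors `p7 = p2p4 ∩ p3p5`, `p8 = p1p4 ∩ p3p6`, `p9 = p1p5 ∩ p2p6` are the meeting points of
opposite sides of the hexagon `p1 p4 p2 p6 p3 p5`. Because incidence in a line representation is
an equivalence, the points are distinct and each pair of lines through an anchor is non-parallel
(otherwise the two lines coincide and carry a fixer they must avoid), so the affine Pappus theorem
applies. We prove it in coordinates: Cramer's rule writes each anchor, scaled by a nonzero
determinant, as a polynomial in the fixers, and once `p1` is moved to the origin the collinearity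
determinant of the anchors vanishes by a polynomial identity.
-/

open AffineMap

section CommRing

variable {k : Type*} [CommRing k]

def cross (u v : k × k) : k := u.1 * v.2 - u.2 * v.1

/-- Twice the signed area of the triangle `p q r`. -/
def area (p q r : k × k) : k := cross (q - p) (r - p)

/-- `cross (q - p) (s - r)` times the intersection point of the lines `pq` and `rs`
(Cramer's rule). -/
def meet (p q r s : k × k) : k × k := area r s p • q - area r s q • p

lemma area_sub_sub_sub (p q r o : k × k) : area (p - o) (q - o) (r - o) = area p q r := by
  simp only [area, sub_sub_sub_cancel_right]

lemma area_eq_zero_of_mem_affineSpan_pair {p q x : k × k} (h : x ∈ line[k, p, q]) :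
    area p q x = 0 := by
  obtain ⟨r, rfl⟩ := mem_affineSpan_pair_iff_exists_lineMap_eq.1 h
  simp only [area, cross, lineMap_apply_module, Prod.fst_add, Prod.snd_add, Prod.fst_sub,
    Prod.snd_sub, Prod.smul_fst, Prod.smul_snd, smul_eq_mul]
  ring

lemma cross_smul_eq_meet {p q r s x : k × k} (hx : area p q x = 0) (hx' : area r s x = 0) :
    cross (q - p) (s - r) • x = meet p q r s := by
  simp only [area, cross, meet, Prod.fst_sub, Prod.snd_sub] at hx hx' ⊢
  ext
  · simp only [Prod.smul_fst, Prod.fst_sub, smul_eq_mul]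
    linear_combination (s.1 - r.1) * hx - (q.1 - p.1) * hx'
  · simp only [Prod.smul_snd, Prod.snd_sub, smul_eq_mul]
    linear_combination (s.2 - r.2) * hx - (q.2 - p.2) * hx'

lemma mul_mul_mul_area (a b c : k) (x y z : k × k) :
    a * b * c * area x y z =
      c * cross (a • x) (b • y) + a * cross (b • y) (c • z) + b * cross (c • z) (a • x) := by
  simp only [area, cross, Prod.fst_sub, Prod.snd_sub, Prod.smul_fst, Prod.smul_snd, smul_eq_mul]
  ring

/-- Placing `a₁` at the origin keeps this `ring` computation small; the general case follows by
translation. -/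
lemma pappus_identity {a₁ a₂ a₃ b₁ b₂ b₃ : k × k} {t s : k} (h₀ : a₁ = 0)
    (ha : a₃ = lineMap a₁ a₂ t) (hb : b₃ = lineMap b₁ b₂ s) :
    cross (b₂ - a₁) (b₃ - a₂) * cross (meet a₂ b₁ a₃ b₂) (meet a₁ b₁ a₃ b₃)
      + cross (b₁ - a₂) (b₂ - a₃) * cross (meet a₁ b₁ a₃ b₃) (meet a₁ b₂ a₂ b₃)
      + cross (b₁ - a₁) (b₃ - a₃) * cross (meet a₁ b₂ a₂ b₃) (meet a₂ b₁ a₃ b₂) = 0 := by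
  subst h₀ ha hb
  simp only [meet, area, cross, lineMap_apply_module, Prod.fst_add, Prod.snd_add, Prod.fst_sub,
    Prod.snd_sub, Prod.smul_fst, Prod.smul_snd, smul_eq_mul, Prod.fst_zero, Prod.snd_zero]
  ring

end CommRing

section Field

variable {k : Type*} [Field k]

lemma mem_affineSpan_pair_of_area_eq_zero {p q x : k × k} (hpq : p ≠ q) (h : area p q x = 0) :
    x ∈ line[k, p, q] := by
  rw [← vsub_vadd x p, vadd_left_mem_affineSpan_pair]
  simp only [area, cross, Prod.fst_sub, Prod.snd_sub] at h
  rcases not_and_or.1 (fun h ↦ hpq (Prod.ext h.1 h.2).symm) with h₁ | h₂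
  · have : q.1 - p.1 ≠ 0 := sub_ne_zero.2 h₁
    refine ⟨(x.1 - p.1) / (q.1 - p.1), Prod.ext ?_ ?_⟩
    · simp only [Prod.smul_fst, Prod.fst_sub, smul_eq_mul, vsub_eq_sub]
      field_simp
    · simp only [Prod.smul_snd, Prod.snd_sub, smul_eq_mul, vsub_eq_sub]
      field_simp
      linear_combination -h
  · have : q.2 - p.2 ≠ 0 := sub_ne_zero.2 h₂
    refine ⟨(x.2 - p.2) / (q.2 - p.2), Prod.ext ?_ ?_⟩
    · simp only [Prod.smul_fst, Prod.fst_sub, smul_eq_mul, vsub_eq_sub]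
      field_simp
      linear_combination h
    · simp only [Prod.smul_snd, Prod.snd_sub, smul_eq_mul, vsub_eq_sub]
      field_simp

lemma collinear_of_area_eq_zero {p q r : k × k} (h : area p q r = 0) :
    Collinear k {p, q, r} := by
  rcases eq_or_ne p q with rfl | hpq
  · simpa using collinear_pair k p r
  · have := collinear_insert_of_mem_affineSpan_pair (mem_affineSpan_pair_of_area_eq_zero hpq h)
    rwa [Set.insert_comm, Set.pair_comm] at this

/-- Two lines through a common point `x` with parallel directions coincide. -/
lemma cross_ne_zero_of_notMem {p q r s x : k × k} (hx : x ∈ line[k, p, q])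
    (hx' : x ∈ line[k, r, s]) (hpq : p ≠ q) (hr : r ∉ line[k, p, q]) :
    cross (q - p) (s - r) ≠ 0 := by
  intro h
  refine hr (mem_affineSpan_pair_of_area_eq_zero hpq ?_)
  have hpqx := area_eq_zero_of_mem_affineSpan_pair hx
  obtain ⟨u, rfl⟩ := mem_affineSpan_pair_iff_exists_lineMap_eq.1 hx'
  simp only [area, cross, lineMap_apply_module, Prod.fst_add, Prod.snd_add, Prod.fst_sub,
    Prod.snd_sub, Prod.smul_fst, Prod.smul_snd, smul_eq_mul] at h hpqx ⊢
  linear_combination hpqx - u * h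

lemma area_eq_zero_of_pappus_of_eq_zero {a₁ a₂ a₃ b₁ b₂ b₃ x y z : k × k} {t s : k}
    (h₀ : a₁ = 0) (ha : a₃ = lineMap a₁ a₂ t) (hb : b₃ = lineMap b₁ b₂ s)
    (hx : area a₂ b₁ x = 0) (hx' : area a₃ b₂ x = 0)
    (hy : area a₁ b₁ y = 0) (hy' : area a₃ b₃ y = 0)
    (hz : area a₁ b₂ z = 0) (hz' : area a₂ b₃ z = 0)
    (nx : cross (b₁ - a₂) (b₂ - a₃) ≠ 0) (ny : cross (b₁ - a₁) (b₃ - a₃) ≠ 0)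
    (nz : cross (b₂ - a₁) (b₃ - a₂) ≠ 0) : area x y z = 0 := by
  have key := mul_mul_mul_area (cross (b₁ - a₂) (b₂ - a₃)) (cross (b₁ - a₁) (b₃ - a₃))
    (cross (b₂ - a₁) (b₃ - a₂)) x y z
  rw [cross_smul_eq_meet hx hx', cross_smul_eq_meet hy hy', cross_smul_eq_meet hz hz',
    pappus_identity h₀ ha hb] at key
  simpa [nx, ny, nz] using key

theorem collinear_of_pappus {a₁ a₂ a₃ b₁ b₂ b₃ x y z : k × k}
    (ha : a₃ ∈ line[k, a₁, a₂]) (hb : b₃ ∈ line[k, b₁, b₂])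
    (hx : x ∈ line[k, a₂, b₁]) (hx' : x ∈ line[k, a₃, b₂])
    (hy : y ∈ line[k, a₁, b₁]) (hy' : y ∈ line[k, a₃, b₃])
    (hz : z ∈ line[k, a₁, b₂]) (hz' : z ∈ line[k, a₂, b₃])
    (nx : cross (b₁ - a₂) (b₂ - a₃) ≠ 0) (ny : cross (b₁ - a₁) (b₃ - a₃) ≠ 0)
    (nz : cross (b₂ - a₁) (b₃ - a₂) ≠ 0) : Collinear k {x, y, z} := by
  obtain ⟨t, rfl⟩ := mem_affineSpan_pair_iff_exists_lineMap_eq.1 ha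
  obtain ⟨s, rfl⟩ := mem_affineSpan_pair_iff_exists_lineMap_eq.1 hb
  apply collinear_of_area_eq_zero
  rw [← area_sub_sub_sub x y z a₁]
  refine area_eq_zero_of_pappus_of_eq_zero (a₁ := a₁ - a₁) (a₂ := a₂ - a₁) (b₁ := b₁ - a₁)
    (b₂ := b₂ - a₁) (sub_self a₁) (lineMap_vsub a₁ a₂ a₁ t) (lineMap_vsub b₁ b₂ a₁ s)
    ?_ ?_ ?_ ?_ ?_ ?_ ?_ ?_ ?_
  all_goals simp only [vsub_eq_sub, area_sub_sub_sub, sub_sub_sub_cancel_right]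
  exacts [area_eq_zero_of_mem_affineSpan_pair hx, area_eq_zero_of_mem_affineSpan_pair hx',
    area_eq_zero_of_mem_affineSpan_pair hy, area_eq_zero_of_mem_affineSpan_pair hy',
    area_eq_zero_of_mem_affineSpan_pair hz, area_eq_zero_of_mem_affineSpan_pair hz', nx, ny, nz]

end Field

namespace LineRep

variable {ι : Type} {H : PHypergraph ι} (R : LineRep H)

lemma α_ne {u v : ι} (hu : u ∈ H.V) (hv : v ∈ H.V) (huv : u ≠ v) : R.α u ≠ R.α v :=
  fun h ↦ huv (R.α_inj hu hv h)

lemma β_eq_affineSpan_pair {e : Finset ι} (he : e ∈ H.E) {u v : ι} (hu : u ∈ e) (hv : v ∈ e)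
    (huv : u ≠ v) : R.β e = line[ℝ, R.α u, R.α v] := by
  obtain ⟨a, b, -, hab⟩ := R.β_isLine e he
  have hmem : ∀ w ∈ e, R.α w ∈ line[ℝ, a, b] := fun w hw ↦ by
    simpa [hab] using (R.incidence w (H.edge_subset e he hw) e he).1 hw
  rw [hab, affineSpan_pair_eq_of_mem_of_mem_of_ne (hmem u hu) (hmem v hv)
    (R.α_ne (H.edge_subset e he hu) (H.edge_subset e he hv) huv)]

lemma mem_iff_mem_affineSpan_pair {e : Finset ι} (he : e ∈ H.E) {u v w : ι} (hu : u ∈ e)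
    (hv : v ∈ e) (huv : u ≠ v) (hw : w ∈ H.V) : w ∈ e ↔ R.α w ∈ line[ℝ, R.α u, R.α v] := by
  rw [R.incidence w hw e he, R.β_eq_affineSpan_pair he hu hv huv, SetLike.mem_coe]

end LineRep

theorem stmt1 (R : LineRep pappus) :
    Collinear ℝ {R.α 6, R.α 7, R.α 8} := by
  have ha : R.α 2 ∈ line[ℝ, R.α 0, R.α 1] := by
    rw [← R.mem_iff_mem_affineSpan_pair (e := {0, 1, 2})] <;> decide
  have hb : R.α 5 ∈ line[ℝ, R.α 3, R.α 4] := by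
    rw [← R.mem_iff_mem_affineSpan_pair (e := {3, 4, 5})] <;> decide
  have hx : R.α 6 ∈ line[ℝ, R.α 1, R.α 3] := by
    rw [← R.mem_iff_mem_affineSpan_pair (e := {1, 3, 6})] <;> decide
  have hx' : R.α 6 ∈ line[ℝ, R.α 2, R.α 4] := by
    rw [← R.mem_iff_mem_affineSpan_pair (e := {2, 4, 6})] <;> decide
  have hy : R.α 7 ∈ line[ℝ, R.α 0, R.α 3] := by
    rw [← R.mem_iff_mem_affineSpan_pair (e := {0, 3, 7})] <;> decide
  have hy' : R.α 7 ∈ line[ℝ, R.α 2, R.α 5] := by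
    rw [← R.mem_iff_mem_affineSpan_pair (e := {2, 5, 7})] <;> decide
  have hz : R.α 8 ∈ line[ℝ, R.α 0, R.α 4] := by
    rw [← R.mem_iff_mem_affineSpan_pair (e := {0, 4, 8})] <;> decide
  have hz' : R.α 8 ∈ line[ℝ, R.α 1, R.α 5] := by
    rw [← R.mem_iff_mem_affineSpan_pair (e := {1, 5, 8})] <;> decide
  have nx : R.α 2 ∉ line[ℝ, R.α 1, R.α 3] := by
    rw [← R.mem_iff_mem_affineSpan_pair (e := {1, 3, 6})] <;> decide
  have ny : R.α 2 ∉ line[ℝ, R.α 0, R.α 3] := by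
    rw [← R.mem_iff_mem_affineSpan_pair (e := {0, 3, 7})] <;> decide
  have nz : R.α 1 ∉ line[ℝ, R.α 0, R.α 4] := by
    rw [← R.mem_iff_mem_affineSpan_pair (e := {0, 4, 8})] <;> decide
  refine collinear_of_pappus ha hb hx hx' hy hy' hz hz'
    (cross_ne_zero_of_notMem hx hx' ?_ nx) (cross_ne_zero_of_notMem hy hy' ?_ ny)
    (cross_ne_zero_of_notMem hz hz' ?_ nz) <;>
  exact R.α_ne (by decide) (by decide) (by decide)
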